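/- arXiv:1511.01195 — 2 statements merged into one kernel-verified Lean document; each statement's English description precedes it below -/
import Mathlib

section
/- Let (M, d) be a compact metric space and μ a finite Borel measure on M with μ(M) > 0. Let G be a group of isometries of (M, d), each of which preserves μ, and assume G acts transitively on M. Let m ≥ 1 and let e_1, …, e_m : M → ℂ be continuous functions that are orthonormal in L²(μ), and whose span E is G-invariant. Then for every x ∈ M one has ∑_{i=1}^m |e_i(x)|² = m / μ(M). -/
/-!
Writing `e ∘ g = A e` for a matrix `A`, invariance of `μ` under `g` turns the orthonormality of
`e ∘ g` into `A Aᴴ = 1`. Hence `A` is unitary and `∑ |e_i|²` takes the same value at `x` and at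
`g x`; by transitivity it is constant, and integrating it gives `m = μ(M) · ∑ |e_i(x)|²`.
-/

open MeasureTheory Matrix ComplexConjugate

section GramMatrix

variable {M ι κ : Type*} [MeasurableSpace M] (μ : Measure M)

noncomputable def gramMatrix (f : ι → M → ℂ) : Matrix ι ι ℂ :=
  Matrix.of fun i j => ∫ x, f i x * conj (f j x) ∂μ

variable {μ}

theorem gramMatrix_comp {g : M → M} (hg : MeasurePreserving g μ μ) {f : ι → M → ℂ}
    (hf : ∀ i j, AEStronglyMeasurable (fun x => f i x * conj (f j x)) μ) :
    gramMatrix μ (fun i x => f i (g x)) = gramMatrix μ f := by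
  ext i j
  simp only [gramMatrix, of_apply]
  have := integral_map hg.aemeasurable (hg.map_eq.symm ▸ hf i j)
  rwa [hg.map_eq, eq_comm] at this

theorem gramMatrix_mulVec [Fintype ι] (A : Matrix κ ι ℂ) {f : ι → M → ℂ}
    (hf : ∀ i j, Integrable (fun x => f i x * conj (f j x)) μ) :
    gramMatrix μ (fun k x => (A *ᵥ (f · x)) k) = A * gramMatrix μ f * Aᴴ := by
  ext k l
  have hterm : ∀ i j, Integrable (fun x => A k i * conj (A l j) * (f i x * conj (f j x))) μ :=
    fun i j => (hf i j).const_mul _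
  calc ∫ x, (∑ i, A k i * f i x) * conj (∑ j, A l j * f j x) ∂μ
      = ∫ x, ∑ i, ∑ j, A k i * conj (A l j) * (f i x * conj (f j x)) ∂μ := by
        congr 1; funext x
        simp only [map_sum, map_mul, Finset.sum_mul_sum]
        exact Finset.sum_congr rfl fun i _ => Finset.sum_congr rfl fun j _ => by ring
    _ = ∑ i, ∑ j, A k i * conj (A l j) * ∫ x, f i x * conj (f j x) ∂μ := by
        rw [integral_finsetSum _ fun i _ => integrable_finsetSum _ fun j _ => hterm i j]
        refine Finset.sum_congr rfl fun i _ => ?_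
        rw [integral_finsetSum _ fun j _ => hterm i j]
        simp only [integral_const_mul]
    _ = (A * gramMatrix μ f * Aᴴ) k l := by
        simp only [mul_apply, gramMatrix, of_apply, conjTranspose_apply, Finset.sum_mul,
          RCLike.star_def]
        rw [Finset.sum_comm]
        exact Finset.sum_congr rfl fun i _ => Finset.sum_congr rfl fun j _ => by ring

end GramMatrix

theorem exists_mulVec_eq_of_mem_span {X ι κ : Type*} [Fintype ι] {f : ι → X → ℂ}
    {h : κ → X → ℂ} (hh : ∀ k, h k ∈ Submodule.span ℂ (Set.range f)) :
    ∃ A : Matrix κ ι ℂ, ∀ x, (h · x) = A *ᵥ (f · x) := by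
  choose A hA using fun k => (Submodule.mem_span_range_iff_exists_fun ℂ).mp (hh k)
  refine ⟨Matrix.of A, fun x => funext fun k => ?_⟩
  simp [← hA k, mulVec, dotProduct, Finset.sum_apply]

theorem ofReal_sum_norm_sq_eq_star_dotProduct_self {ι : Type*} [Fintype ι] (v : ι → ℂ) :
    ((∑ i, ‖v i‖ ^ 2 : ℝ) : ℂ) = star v ⬝ᵥ v := by
  simp [dotProduct, Complex.conj_mul']

theorem sum_norm_sq_mulVec_of_mem_unitaryGroup {ι : Type*} [Fintype ι] [DecidableEq ι]
    {U : Matrix ι ι ℂ} (hU : U ∈ unitaryGroup ι ℂ) (v : ι → ℂ) :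
    ∑ i, ‖(U *ᵥ v) i‖ ^ 2 = ∑ i, ‖v i‖ ^ 2 := by
  rw [← Complex.ofReal_inj, ofReal_sum_norm_sq_eq_star_dotProduct_self,
    ofReal_sum_norm_sq_eq_star_dotProduct_self, star_mulVec, ← dotProduct_mulVec, mulVec_mulVec,
    ← star_eq_conjTranspose, mem_unitaryGroup_iff'.mp hU, one_mulVec]

section Orthonormal

variable {M ι : Type*} [MeasurableSpace M] [Fintype ι] [DecidableEq ι] {μ : Measure M}
  {f : ι → M → ℂ}

theorem sum_norm_sq_comp_eq_of_gramMatrix_eq_one (hf : gramMatrix μ f = 1)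
    (hfi : ∀ i j, Integrable (fun x => f i x * conj (f j x)) μ) {g : M → M}
    (hg : MeasurePreserving g μ μ)
    (hspan : ∀ i, (fun x => f i (g x)) ∈ Submodule.span ℂ (Set.range f)) (x : M) :
    ∑ i, ‖f i (g x)‖ ^ 2 = ∑ i, ‖f i x‖ ^ 2 := by
  obtain ⟨A, hA⟩ := exists_mulVec_eq_of_mem_span hspan
  have hU : A ∈ unitaryGroup ι ℂ := by
    have hgram := gramMatrix_mulVec (μ := μ) A hfi
    simp only [← hA, gramMatrix_comp hg fun i j => (hfi i j).aestronglyMeasurable, hf,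
      mul_one] at hgram
    rw [mem_unitaryGroup_iff, star_eq_conjTranspose, ← hgram]
  calc ∑ i, ‖f i (g x)‖ ^ 2 = ∑ i, ‖(A *ᵥ (f · x)) i‖ ^ 2 := by simp only [← hA x]
    _ = ∑ i, ‖f i x‖ ^ 2 := sum_norm_sq_mulVec_of_mem_unitaryGroup hU (f · x)

theorem integral_sum_norm_sq_of_gramMatrix_eq_one (hf : gramMatrix μ f = 1)
    (hfi : ∀ i, Integrable (fun x => f i x * conj (f i x)) μ) :
    ∫ x, ∑ i, ‖f i x‖ ^ 2 ∂μ = Fintype.card ι := by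
  have hnorm : ∀ i x, f i x * conj (f i x) = ((‖f i x‖ ^ 2 : ℝ) : ℂ) := by
    simp [Complex.mul_conj']
  have hdiag : ∀ i, ∫ x, ‖f i x‖ ^ 2 ∂μ = 1 := fun i => by
    have hii := congrFun₂ hf i i
    simp only [gramMatrix, of_apply, one_apply_eq, hnorm] at hii
    exact_mod_cast hii
  have hint : ∀ i, Integrable (fun x => ‖f i x‖ ^ 2) μ := fun i => by
    simpa only [hnorm, RCLike.re_to_complex, Complex.ofReal_re] using (hfi i).re
  rw [integral_finsetSum _ fun i _ => hint i]
  simp [hdiag]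

end Orthonormal

theorem sum_sq_eigenbasis_const_general {M : Type*} [MetricSpace M] [CompactSpace M]
    [MeasurableSpace M] [BorelSpace M]
    (μ : Measure M) [IsFiniteMeasure μ] (hμpos : 0 < μ Set.univ)
    (G : Subgroup (M ≃ᵢ M))
    (hGmp : ∀ g ∈ G, MeasurePreserving (g : M → M) μ μ)
    (hGtrans : ∀ x y : M, ∃ g ∈ G, g x = y)
    (m : ℕ) (e : Fin m → M → ℂ)
    (he_cont : ∀ i, Continuous (e i))
    (he_orth : ∀ i j, ∫ x, e i x * (starRingEnd ℂ) (e j x) ∂μ = if i = j then 1 else 0)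
    (he_inv : ∀ g ∈ G, ∀ i, (fun x => e i (g x)) ∈ Submodule.span ℂ (Set.range e)) :
    ∀ x : M, ∑ i, ‖e i x‖ ^ 2 = m / (μ Set.univ).toReal := by
  have hint : ∀ i j, Integrable (fun x => e i x * conj (e j x)) μ := fun i j =>
    ((he_cont i).mul (Complex.continuous_conj.comp (he_cont j))).integrable_of_hasCompactSupport
      (.of_compactSpace _)
  have hgram : gramMatrix μ e = 1 := by
    ext i j
    simpa [gramMatrix, one_apply, eq_comm] using he_orth i j
  intro x
  have hconst : ∀ y, ∑ i, ‖e i y‖ ^ 2 = ∑ i, ‖e i x‖ ^ 2 := fun y => by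
    obtain ⟨g, hg, rfl⟩ := hGtrans x y
    exact sum_norm_sq_comp_eq_of_gramMatrix_eq_one hgram hint (hGmp g hg) (he_inv g hg) x
  have hμ : (μ Set.univ).toReal ≠ 0 := (ENNReal.toReal_pos hμpos.ne' (measure_ne_top μ _)).ne'
  rw [eq_div_iff hμ]
  calc _ = ∫ y, ∑ i, ‖e i y‖ ^ 2 ∂μ := by simp [hconst, Measure.real, mul_comm]
    _ = m := by simpa using integral_sum_norm_sq_of_gramMatrix_eq_one hgram fun i => hint i i

/-- On a compact metric space with a finite Borel measure preserved by a
transitively acting group of isometries, if `e 1, …, e m` are continuous functions, orthonormal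
in `L²(μ)`, spanning a `G`-invariant space, then `∑ i, |e i x|² = m / μ(M)` for every `x`. -/
theorem sum_sq_eigenbasis_const {M : Type*} [MetricSpace M] [CompactSpace M]
    [MeasurableSpace M] [BorelSpace M]
    (μ : Measure M) [IsFiniteMeasure μ] (hμpos : 0 < μ Set.univ)
    (G : Subgroup (M ≃ᵢ M))
    (hGmp : ∀ g ∈ G, MeasurePreserving (g : M → M) μ μ)
    (hGtrans : ∀ x y : M, ∃ g ∈ G, g x = y)
    (m : ℕ) (hm : 1 ≤ m) (e : Fin m → M → ℂ)
    (he_cont : ∀ i, Continuous (e i))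
    (he_orth : ∀ i j, ∫ x, e i x * (starRingEnd ℂ) (e j x) ∂μ = if i = j then 1 else 0)
    (he_inv : ∀ g ∈ G, ∀ i, (fun x => e i (g x)) ∈ Submodule.span ℂ (Set.range e)) :
    ∀ x : M, ∑ i, ‖e i x‖ ^ 2 = m / (μ Set.univ).toReal :=
  sum_sq_eigenbasis_const_general μ hμpos G hGmp hGtrans m e he_cont he_orth he_inv
end

section
/- Let (M, d) be a compact metric space and μ a finite Borel measure on M with μ(M) > 0. Let G be a group of isometries of (M, d), each of which preserves μ, and assume G acts transitively on M. Let m ≥ 1 and let e_1, …, e_m : M → ℂ be continuous functions that are orthonormal in L²(μ), and whose span E is G-invariant. Let σ be the uniform probability measure on the complex unit sphere S = {z ∈ ℂ^m : |z| = 1}. Then for every Borel set Ω ⊆ M, the expected local L²-mass of a random unit vector of E satisfies ∫_S ( ∫_Ω |∑_{i=1}^m z_i e_i(x)|² dμ(x) ) dσ(z) = μ(Ω)/μ(M). -/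
/-!
The function `Φ x = ∑ i, ‖e i x‖²` is the squared norm of the evaluation vector `(e i x)ᵢ`.
A measure-preserving `g` acts on the span of the `e i` by a matrix that preserves their `L²`
Gram matrix, i.e. a unitary matrix, so `Φ ∘ g = Φ`; by transitivity `Φ` is constant, and
`∫ Φ dμ = m` forces `Φ = m / μ(M)`.

For a unitarily invariant probability measure `σ` on the unit sphere, `∫ ‖⟪w, z⟫‖² dσ(z)` depends
only on `‖w‖`, since the unitary group acts transitively on unit vectors; summing over an
orthonormal basis gives `∫ ‖z‖² dσ = 1`, so the integral is `‖w‖² / m`. Writing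
`∑ i, z i * e i x = ⟪v x, z⟫` and exchanging the two integrals, the left-hand side becomes
`∫_Ω Φ / m dμ = μ(Ω) / μ(M)`.
-/

open MeasureTheory Module
open scoped InnerProductSpace ComplexConjugate

theorem ae_norm_eq_one_of_measure_sphere {F : Type*} [SeminormedAddCommGroup F]
    [MeasurableSpace F] [OpensMeasurableSpace F] {σ : Measure F} [IsProbabilityMeasure σ]
    (hσ : σ (Metric.sphere 0 1) = 1) : ∀ᵐ z ∂σ, ‖z‖ = 1 := by
  have h := (ae_iff_measure_eq (p := (· ∈ Metric.sphere (0 : F) 1))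
    Metric.isClosed_sphere.measurableSet.nullMeasurableSet).mpr
    (by rw [Set.ofPred_mem_eq, hσ, measure_univ])
  exact h.mono fun z hz => mem_sphere_zero_iff_norm.mp hz

section SphereMoments

variable {𝕜 E : Type*} [RCLike 𝕜] [NormedAddCommGroup E] [InnerProductSpace 𝕜 E]

theorem LinearIsometryEquiv.exists_apply_eq_of_norm_eq_one [FiniteDimensional 𝕜 E] {w w' : E}
    (hw : ‖w‖ = 1) (hw' : ‖w'‖ = 1) : ∃ U : E ≃ₗᵢ[𝕜] E, U w = w' := by
  have hpos : 0 < finrank 𝕜 E :=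
    finrank_pos_iff_exists_ne_zero.mpr ⟨w, norm_ne_zero_iff.mp (by simp [hw])⟩
  let i₀ : Fin (finrank 𝕜 E) := ⟨0, hpos⟩
  have extend (u : E) (hu : ‖u‖ = 1) :
      ∃ b : OrthonormalBasis (Fin (finrank 𝕜 E)) 𝕜 E, b i₀ = u := by
    obtain ⟨b, hb⟩ := Orthonormal.exists_orthonormalBasis_extension_of_card_eq (𝕜 := 𝕜)
      (v := fun _ => u) (s := {i₀}) (by simp) ⟨fun _ => hu, Subsingleton.pairwise⟩
    exact ⟨b, hb i₀ rfl⟩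
  obtain ⟨b, rfl⟩ := extend w hw
  obtain ⟨b', rfl⟩ := extend w' hw'
  exact ⟨b.repr.trans b'.repr.symm, by simp⟩

variable [MeasurableSpace E] [BorelSpace E] {σ : Measure E}

theorem integrable_norm_inner_sq [IsFiniteMeasure σ] (hσ₁ : ∀ᵐ z ∂σ, ‖z‖ = 1) (w : E) :
    Integrable (fun z => ‖⟪w, z⟫_𝕜‖ ^ 2) σ := by
  refine Integrable.mono' (integrable_const (‖w‖ ^ 2)) (by fun_prop) ?_
  filter_upwards [hσ₁] with z hz
  simpa [hz] using pow_le_pow_left₀ (norm_nonneg _) (norm_inner_le_norm (𝕜 := 𝕜) w z) 2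

theorem integral_norm_inner_sq_linearIsometryEquiv (hσ : ∀ U : E ≃ₗᵢ[𝕜] E, σ.map U = σ)
    (U : E ≃ₗᵢ[𝕜] E) (w : E) :
    ∫ z, ‖⟪U w, z⟫_𝕜‖ ^ 2 ∂σ = ∫ z, ‖⟪w, z⟫_𝕜‖ ^ 2 ∂σ := by
  conv_lhs => rw [← hσ U]
  rw [integral_map U.continuous.aemeasurable (by fun_prop)]
  simp [LinearIsometryEquiv.inner_map_map]

variable [FiniteDimensional 𝕜 E] [IsProbabilityMeasure σ]

theorem integral_norm_inner_sq_of_norm_eq_one (hσ₁ : ∀ᵐ z ∂σ, ‖z‖ = 1)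
    (hσ : ∀ U : E ≃ₗᵢ[𝕜] E, σ.map U = σ) {u : E} (hu : ‖u‖ = 1) :
    ∫ z, ‖⟪u, z⟫_𝕜‖ ^ 2 ∂σ = (finrank 𝕜 E : ℝ)⁻¹ := by
  let b := stdOrthonormalBasis 𝕜 E
  have hb (i) : ∫ z, ‖⟪b i, z⟫_𝕜‖ ^ 2 ∂σ = ∫ z, ‖⟪u, z⟫_𝕜‖ ^ 2 ∂σ := by
    obtain ⟨U, hU⟩ :=
      LinearIsometryEquiv.exists_apply_eq_of_norm_eq_one (𝕜 := 𝕜) hu (b.orthonormal.1 i)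
    rw [← hU, integral_norm_inner_sq_linearIsometryEquiv hσ]
  have hsum : ∑ i, ∫ z, ‖⟪b i, z⟫_𝕜‖ ^ 2 ∂σ = 1 := by
    rw [← integral_finsetSum _ fun i _ => integrable_norm_inner_sq hσ₁ _]
    simp_rw [b.sum_sq_norm_inner_right]
    rw [integral_congr_ae (hσ₁.mono fun z hz => show ‖z‖ ^ 2 = (1 : ℝ) by simp [hz])]
    simp
  simp_rw [hb, Finset.sum_const, Finset.card_univ, Fintype.card_fin, nsmul_eq_mul] at hsum
  exact eq_inv_of_mul_eq_one_right hsum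

theorem integral_norm_inner_sq (hσ₁ : ∀ᵐ z ∂σ, ‖z‖ = 1)
    (hσ : ∀ U : E ≃ₗᵢ[𝕜] E, σ.map U = σ) (w : E) :
    ∫ z, ‖⟪w, z⟫_𝕜‖ ^ 2 ∂σ = ‖w‖ ^ 2 / finrank 𝕜 E := by
  rcases eq_or_ne w 0 with rfl | hw
  · simp
  set u : E := ((‖w‖⁻¹ : ℝ) : 𝕜) • w
  have hu : ‖u‖ = 1 := by simpa [u] using norm_smul_inv_norm (𝕜 := 𝕜) hw
  have hwu : w = ((‖w‖ : ℝ) : 𝕜) • u := by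
    rw [smul_smul, ← RCLike.ofReal_mul, mul_inv_cancel₀ (norm_ne_zero_iff.mpr hw),
      RCLike.ofReal_one, one_smul]
  calc ∫ z, ‖⟪w, z⟫_𝕜‖ ^ 2 ∂σ = ∫ z, ‖w‖ ^ 2 * ‖⟪u, z⟫_𝕜‖ ^ 2 ∂σ := by
        congr with z
        conv_lhs => rw [hwu]
        rw [inner_smul_real_left, norm_smul, mul_pow, Real.norm_of_nonneg (norm_nonneg _)]
    _ = ‖w‖ ^ 2 / finrank 𝕜 E := by
        rw [integral_const_mul, integral_norm_inner_sq_of_norm_eq_one hσ₁ hσ hu, div_eq_mul_inv]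

theorem integral_integral_norm_inner_sq {X : Type*} [TopologicalSpace X] [CompactSpace X]
    [MeasurableSpace X] [OpensMeasurableSpace X] [SecondCountableTopology X]
    {ν : Measure X} [IsFiniteMeasure ν] (hσ₁ : ∀ᵐ z ∂σ, ‖z‖ = 1)
    (hσ : ∀ U : E ≃ₗᵢ[𝕜] E, σ.map U = σ) {v : X → E} (hv : Continuous v) :
    ∫ z, ∫ x, ‖⟪v x, z⟫_𝕜‖ ^ 2 ∂ν ∂σ = ∫ x, ‖v x‖ ^ 2 / finrank 𝕜 E ∂ν := by
  simp_rw [← integral_norm_inner_sq hσ₁ hσ]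
  refine integral_integral_swap ?_
  have hz : Integrable (fun z : E => ‖z‖ ^ 2) σ :=
    (integrable_const (1 : ℝ)).congr (hσ₁.mono fun z hz => by simp [hz])
  have hx : Integrable (fun x => ‖v x‖ ^ 2) ν :=
    (hv.norm.pow 2).integrable_of_hasCompactSupport (HasCompactSupport.of_compactSpace _)
  refine (hz.mul_prod hx).mono' (Continuous.aestronglyMeasurable (by fun_prop))
    (.of_forall fun p => ?_)
  rw [Function.uncurry_apply_pair, norm_pow, norm_norm, ← mul_pow, mul_comm]
  exact pow_le_pow_left₀ (norm_nonneg _) (norm_inner_le_norm _ _) 2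

end SphereMoments

section OrthonormalSystem

variable {α ι : Type*} [MeasurableSpace α] {μ : Measure α} [Fintype ι] [DecidableEq ι]
  {e : ι → α → ℂ}

theorem integral_sum_mul_conj_sum
    (hint : ∀ i j, Integrable (fun x => e i x * conj (e j x)) μ)
    (horth : ∀ i j, ∫ x, e i x * conj (e j x) ∂μ = if i = j then 1 else 0) (a b : ι → ℂ) :
    ∫ x, (∑ i, a i * e i x) * conj (∑ j, b j * e j x) ∂μ = ∑ i, a i * conj (b i) := by
  have hexpand (x : α) : (∑ i, a i * e i x) * conj (∑ j, b j * e j x) =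
      ∑ i, ∑ j, a i * conj (b j) * (e i x * conj (e j x)) := by
    simp only [map_sum, map_mul, Finset.sum_mul_sum, mul_mul_mul_comm]
  simp_rw [hexpand]
  rw [integral_finsetSum _ fun i _ => integrable_finsetSum _ fun j _ => (hint i j).const_mul _]
  congr with i
  rw [integral_finsetSum _ fun j _ => (hint i j).const_mul _]
  simp [integral_const_mul, horth]

theorem sum_norm_sq_comp_eq_of_measurePreserving {g : α → α} (hg : MeasurePreserving g μ μ)
    (hint : ∀ i j, Integrable (fun x => e i x * conj (e j x)) μ)
    (horth : ∀ i j, ∫ x, e i x * conj (e j x) ∂μ = if i = j then 1 else 0)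
    (hspan : ∀ i, (fun x => e i (g x)) ∈ Submodule.span ℂ (Set.range e)) (x : α) :
    ∑ i, ‖e i (g x)‖ ^ 2 = ∑ i, ‖e i x‖ ^ 2 := by
  choose A hA using fun i => (Submodule.mem_span_range_iff_exists_fun ℂ).mp (hspan i)
  have hAe (i) (y : α) : e i (g y) = ∑ j, A i j * e j y := by
    simpa using (congrFun (hA i) y).symm
  have hunitary : Matrix.of A ∈ Matrix.unitaryGroup ι ℂ := by
    rw [Matrix.mem_unitaryGroup_iff]
    ext i j
    have hcomp : ∫ y, e i (g y) * conj (e j (g y)) ∂μ = ∫ y, e i y * conj (e j y) ∂μ := by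
      have h := integral_map (f := fun y => e i y * conj (e j y)) hg.aemeasurable
        (by rw [hg.map_eq]; exact (hint i j).1)
      rwa [hg.map_eq, eq_comm] at h
    simp_rw [hAe, integral_sum_mul_conj_sum hint horth, horth] at hcomp
    simpa [Matrix.mul_apply, Matrix.one_apply] using hcomp
  have hnorm (y : α) : ∑ i, ‖e i y‖ ^ 2 = ‖WithLp.toLp 2 (fun i => e i y)‖ ^ 2 := by
    simp [EuclideanSpace.norm_sq_eq]
  have hmap : WithLp.toLp 2 (fun i => e i (g x)) =
      Matrix.toEuclideanCLM (𝕜 := ℂ) (Matrix.of A) (WithLp.toLp 2 (fun i => e i x)) := by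
    ext i
    simp [hAe, Matrix.mulVec, dotProduct]
  rw [hnorm, hnorm, hmap, ContinuousLinearMap.norm_map_of_mem_unitary
    (Unitary.map_mem _ hunitary)]

theorem integral_sum_norm_sq
    (hint : ∀ i j, Integrable (fun x => e i x * conj (e j x)) μ)
    (horth : ∀ i j, ∫ x, e i x * conj (e j x) ∂μ = if i = j then 1 else 0) :
    ∫ x, ∑ i, ‖e i x‖ ^ 2 ∂μ = Fintype.card ι := by
  have hnorm (i) (x : α) : ‖e i x‖ ^ 2 = RCLike.re (e i x * conj (e i x)) := by
    rw [Complex.mul_conj, Complex.normSq_eq_norm_sq, RCLike.re_to_complex, Complex.ofReal_re]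
  have hone (i) : ∫ x, ‖e i x‖ ^ 2 ∂μ = 1 := by
    simp_rw [hnorm, integral_re (hint i i)]
    simp [horth]
  rw [integral_finsetSum _ fun i _ =>
    (hint i i).re.congr (.of_forall fun x => (hnorm i x).symm)]
  simp [hone]

theorem sum_norm_sq_mul_measureReal_univ [IsFiniteMeasure μ]
    (hint : ∀ i j, Integrable (fun x => e i x * conj (e j x)) μ)
    (horth : ∀ i j, ∫ x, e i x * conj (e j x) ∂μ = if i = j then 1 else 0)
    (htrans : ∀ x y, ∃ g : α → α, MeasurePreserving g μ μ ∧
      (∀ i, (fun x => e i (g x)) ∈ Submodule.span ℂ (Set.range e)) ∧ g x = y) (x : α) :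
    (∑ i, ‖e i x‖ ^ 2) * μ.real Set.univ = Fintype.card ι := by
  have hconst (y : α) : ∑ i, ‖e i y‖ ^ 2 = ∑ i, ‖e i x‖ ^ 2 := by
    obtain ⟨g, hg, hspan, rfl⟩ := htrans x y
    exact sum_norm_sq_comp_eq_of_measurePreserving hg hint horth hspan x
  have htotal := integral_sum_norm_sq hint horth
  rwa [integral_congr_ae (.of_forall hconst), integral_const, smul_eq_mul, mul_comm] at htotal

end OrthonormalSystem

theorem expected_local_mass_general {M : Type*} [MetricSpace M] [CompactSpace M]
    [MeasurableSpace M] [BorelSpace M]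
    (μ : Measure M) [IsFiniteMeasure μ]
    (G : Subgroup (M ≃ᵢ M))
    (hGmp : ∀ g ∈ G, MeasurePreserving (g : M → M) μ μ)
    (hGtrans : ∀ x y : M, ∃ g ∈ G, g x = y)
    (m : ℕ) (hm : 1 ≤ m) (e : Fin m → M → ℂ)
    (he_cont : ∀ i, Continuous (e i))
    (he_orth : ∀ i j, ∫ x, e i x * (starRingEnd ℂ) (e j x) ∂μ = if i = j then 1 else 0)
    (he_inv : ∀ g ∈ G, ∀ i, (fun x => e i (g x)) ∈ Submodule.span ℂ (Set.range e))
    [MeasurableSpace (EuclideanSpace ℂ (Fin m))] [BorelSpace (EuclideanSpace ℂ (Fin m))]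
    (σ : Measure (EuclideanSpace ℂ (Fin m))) [IsProbabilityMeasure σ]
    (hσ_sphere : σ (Metric.sphere 0 1) = 1)
    (hσ_inv : ∀ U : EuclideanSpace ℂ (Fin m) ≃ₗᵢ[ℂ] EuclideanSpace ℂ (Fin m),
      Measure.map U σ = σ)
    (Ω : Set M) :
    ∫ z, (∫ x in Ω, ‖∑ i, z i * e i x‖ ^ 2 ∂μ) ∂σ = (μ Ω).toReal / (μ Set.univ).toReal := by
  have hint (i j) : Integrable (fun x => e i x * conj (e j x)) μ :=
    ((he_cont i).mul (Complex.continuous_conj.comp (he_cont j))).integrable_of_hasCompactSupport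
      (HasCompactSupport.of_compactSpace _)
  have hmass := sum_norm_sq_mul_measureReal_univ hint he_orth fun x y => by
    obtain ⟨g, hg, rfl⟩ := hGtrans x y
    exact ⟨g, hGmp g hg, he_inv g hg, rfl⟩
  let v (x : M) : EuclideanSpace ℂ (Fin m) := WithLp.toLp 2 fun i => conj (e i x)
  have hv (z : EuclideanSpace ℂ (Fin m)) (x : M) : ∑ i, z i * e i x = ⟪v x, z⟫_ℂ := by
    simp [v, PiLp.inner_apply, mul_comm]
  have hv_mass (x : M) : ‖v x‖ ^ 2 / m = (μ Set.univ).toReal⁻¹ := by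
    have hm' : (m : ℝ) ≠ 0 := Nat.cast_ne_zero.mpr (by omega)
    have hx := hmass x
    rw [Fintype.card_fin, Measure.real] at hx
    rw [← hx] at hm' ⊢
    simp only [v, EuclideanSpace.norm_sq_eq, Complex.norm_conj]
    field_simp [left_ne_zero_of_mul hm', right_ne_zero_of_mul hm']
  simp_rw [hv]
  rw [integral_integral_norm_inner_sq (ae_norm_eq_one_of_measure_sphere hσ_sphere) hσ_inv
    (by fun_prop)]
  simp_rw [finrank_euclideanSpace_fin, hv_mass, setIntegral_const, smul_eq_mul, Measure.real,
    div_eq_mul_inv]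

/-- The expected local `L²`-mass of a random unit vector of an
isometry-invariant `m`-dimensional orthonormal system equals the normalized volume:
`∫_S (∫_Ω |∑ i, z i e i|² dμ) dσ(z) = μ(Ω)/μ(M)`. -/
theorem expected_local_mass {M : Type*} [MetricSpace M] [CompactSpace M]
    [MeasurableSpace M] [BorelSpace M]
    (μ : Measure M) [IsFiniteMeasure μ] (hμpos : 0 < μ Set.univ)
    (G : Subgroup (M ≃ᵢ M))
    (hGmp : ∀ g ∈ G, MeasurePreserving (g : M → M) μ μ)
    (hGtrans : ∀ x y : M, ∃ g ∈ G, g x = y)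
    (m : ℕ) (hm : 1 ≤ m) (e : Fin m → M → ℂ)
    (he_cont : ∀ i, Continuous (e i))
    (he_orth : ∀ i j, ∫ x, e i x * (starRingEnd ℂ) (e j x) ∂μ = if i = j then 1 else 0)
    (he_inv : ∀ g ∈ G, ∀ i, (fun x => e i (g x)) ∈ Submodule.span ℂ (Set.range e))
    [MeasurableSpace (EuclideanSpace ℂ (Fin m))] [BorelSpace (EuclideanSpace ℂ (Fin m))]
    (σ : Measure (EuclideanSpace ℂ (Fin m))) [IsProbabilityMeasure σ]
    (hσ_sphere : σ (Metric.sphere 0 1) = 1)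
    (hσ_inv : ∀ U : EuclideanSpace ℂ (Fin m) ≃ₗᵢ[ℂ] EuclideanSpace ℂ (Fin m),
      Measure.map U σ = σ)
    (Ω : Set M) (hΩ : MeasurableSet Ω) :
    ∫ z, (∫ x in Ω, ‖∑ i, z i * e i x‖ ^ 2 ∂μ) ∂σ = (μ Ω).toReal / (μ Set.univ).toReal :=
  expected_local_mass_general μ G hGmp hGtrans m hm e he_cont he_orth he_inv σ hσ_sphere hσ_inv Ω
end
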